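/- (Optimality of the bound in the Discrete Adiabatic Theorem.) Let m ≥ 1 be an integer and let φ : [0,1] → [0,1] be continuous with φ(0)=0, φ(1)=1, (m+1) times continuously differentiable in a neighborhood of 1, with φ^{(k)}(1)=0 for 1 ≤ k < m and φ^{(m)}(1) ≠ 0. For each n ≥ 1 consider Ω = {0,1,…,n}, P_initial the matrix whose every row is the point mass at 0, P_final the matrix with (P_final)_{i,i+1} = 1 for 0 ≤ i ≤ n−1 and (P_final)_{n,n} = 1, and P_s = (1−φ(s)) P_initial + φ(s) P_final. Then there exist constants c > 0, n₀ ∈ ℕ and ε₀ ∈ (0,1), depending only on φ and m, such that for every n ≥ n₀, every ε ∈ (0, ε₀), and every integer T ≥ n: if ‖ν P_{1/T} P_{2/T} ⋯ P_{(T−1)/T} P_1 − δ_n‖_TV ≤ ε for all probability distributions ν on Ω, then T ≥ c · (n^{m+1}/ε)^{1/m}. -/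

import Mathlib

open Matrix BigOperators Finset

/-- `ν` is a probability distribution on the finite set `Ω`. -/
def IsProbDist {Ω : Type*} [Fintype Ω] (ν : Ω → ℝ) : Prop :=
  (∀ i, 0 ≤ ν i) ∧ ∑ i, ν i = 1

/-- Total variation distance between two (signed) measures on a finite set. -/
noncomputable def tvDist {Ω : Type*} [Fintype Ω] (μ ν : Ω → ℝ) : ℝ :=
  (1 / 2) * ∑ x, |μ x - ν x|

/-- The transition matrix on `{0,1,…,n}` each of whose rows is the point mass at `0`. -/
noncomputable def exPinit (n : ℕ) : Matrix (Fin (n + 1)) (Fin (n + 1)) ℝ :=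
  fun _ j => if j = 0 then 1 else 0

/-- The transition matrix on `{0,1,…,n}` moving deterministically `i ↦ i+1`
(for `i < n`) with absorption at `n`:  `(P_final)_{i,i+1} = 1` for `0 ≤ i ≤ n-1`
and `(P_final)_{n,n} = 1`. -/
noncomputable def exPfin (n : ℕ) : Matrix (Fin (n + 1)) (Fin (n + 1)) ℝ :=
  fun i j => if (j : ℕ) = min ((i : ℕ) + 1) n then 1 else 0

/-- The point mass `δ_n` at the state `n` of `{0,1,…,n}`. -/
noncomputable def exDelta (n : ℕ) : Fin (n + 1) → ℝ :=
  fun j => if (j : ℕ) = n then 1 else 0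


/-!
Started anywhere, the chain sits at the top state `n` after its `T` steps only if each of the
last `n` steps moved forward (a reset sends it to `0`, from where `n` more forward moves are
needed). So the mass at `n` is exactly `∏_{k<n} φ(1 - k/T)`, and accuracy `ε` forces
`∑_{k<n} (1 - φ(1 - k/T)) ≤ 4ε`. Near `1`, Taylor's theorem with the first non-vanishing
derivative of order `m` (and `φ ≤ 1`) gives `1 - φ(x) ≥ a (1 - x)^m`, so the sum is at least
of order `∑_{k ≲ n} (k/T)^m ≈ n^{m+1} / T^m`. Hence `T^m ≳ n^{m+1} / ε`.
-/

open Set Filter Topology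

theorem iteratedDerivWithin_Icc_subset {f : ℝ → ℝ} {a a' b x : ℝ} {n : ℕ}
    (hf : ContDiffOn ℝ n f (Icc a b)) (ha : a ≤ a') (hab : a' < b) (hx : x ∈ Icc a' b) :
    iteratedDerivWithin n f (Icc a' b) x = iteratedDerivWithin n f (Icc a b) x := by
  simp only [iteratedDerivWithin_eq_iteratedFDerivWithin]
  rw [iteratedFDerivWithin_subset (Icc_subset_Icc_left ha) (uniqueDiffOn_Icc hab)
    (uniqueDiffOn_Icc (ha.trans_lt hab)) hf hx]

theorem le_neg_one_pow_mul_of_le_iteratedDerivWithin {a b c : ℝ} (hab : a < b) :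
    ∀ {m : ℕ} {f : ℝ → ℝ}, ContDiffOn ℝ m f (Icc a b) →
      (∀ k < m, iteratedDerivWithin k f (Icc a b) b = 0) →
      (∀ x ∈ Icc a b, c ≤ iteratedDerivWithin m f (Icc a b) x) →
      ∀ x ∈ Icc a b, c * (b - x) ^ m / m.factorial ≤ (-1) ^ m * f x
  | 0, f, _, _, hc => by simpa using hc
  | m + 1, f, hf, hzero, hc => by
    have hs : UniqueDiffOn ℝ (Icc a b) := uniqueDiffOn_Icc hab
    have hf' : ∀ x ∈ Icc a b,
        c * (b - x) ^ m / m.factorial ≤ (-1) ^ m * derivWithin f (Icc a b) x :=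
      le_neg_one_pow_mul_of_le_iteratedDerivWithin hab (hf.derivWithin hs le_rfl)
        (fun k hk => by rw [← iteratedDerivWithin_succ']; exact hzero (k + 1) (by omega))
        (by rw [← iteratedDerivWithin_succ']; exact hc)
    set g : ℝ → ℝ := fun x => (-1) ^ (m + 1) * f x - c * (b - x) ^ (m + 1) / (m + 1).factorial
    have hderiv : ∀ x ∈ interior (Icc a b), HasDerivWithinAt g
        ((-1) ^ (m + 1) * derivWithin f (Icc a b) x + c * (b - x) ^ m / m.factorial)
        (interior (Icc a b)) x := by
      intro x hx
      have hfx := ((hf.differentiableOn (by simp)) x (interior_subset hx)).hasDerivWithinAt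
      have hpoly : HasDerivAt (fun y : ℝ => c * (b - y) ^ (m + 1) / (m + 1).factorial)
          (-(c * (b - x) ^ m / m.factorial)) x := by
        have hlin : HasDerivAt (fun y : ℝ => b - y) (-1) x := by
          simpa using (hasDerivAt_id x).const_sub b
        refine (((hlin.pow (m + 1)).const_mul c).div_const _).congr_deriv ?_
        push_cast [Nat.factorial_succ, Nat.add_sub_cancel]
        field_simp
      exact (((hfx.const_mul ((-1) ^ (m + 1))).mono interior_subset).sub
        hpoly.hasDerivWithinAt).congr_deriv (by ring)
    have hanti : AntitoneOn g (Icc a b) := by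
      refine antitoneOn_of_hasDerivWithinAt_nonpos (convex_Icc a b) ?_ hderiv ?_
      · exact (continuousOn_const.mul hf.continuousOn).sub (by fun_prop)
      · intro x hx
        have := hf' x (interior_subset hx)
        rw [pow_succ]
        linarith
    intro x hx
    have hgb : g b = 0 := by
      have h0 := hzero 0 (by omega)
      rw [iteratedDerivWithin_zero] at h0
      simp [g, h0]
    have := hanti hx (right_mem_Icc.2 hab.le) hx.2
    simp only [g, hgb] at this
    linarith

theorem mul_pow_le_of_le_mul_iteratedDerivWithin {f : ℝ → ℝ} {a b c d : ℝ} {m : ℕ}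
    (hm : 0 < m) (hab : a < b) (hf : ContDiffOn ℝ m f (Icc a b))
    (hzero : ∀ k, 0 < k → k < m → iteratedDerivWithin k f (Icc a b) b = 0)
    (hc : ∀ x ∈ Icc a b, c ≤ d * iteratedDerivWithin m f (Icc a b) x) :
    ∀ x ∈ Icc a b, c * (b - x) ^ m / m.factorial ≤ (-1) ^ m * (d * (f x - f b)) := by
  -- written with `f b - f x` so that `iteratedDerivWithin_const_sub` applies
  set g : ℝ → ℝ := fun x => -d * (f b - f x)
  have hg_deriv : ∀ k, 0 < k → ∀ x,
      iteratedDerivWithin k g (Icc a b) x = d * iteratedDerivWithin k f (Icc a b) x := by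
    intro k hk x
    simp only [g, iteratedDerivWithin_const_mul_field, iteratedDerivWithin_const_sub hk,
      iteratedDerivWithin_fun_neg]
    ring
  have hg_zero : ∀ k < m, iteratedDerivWithin k g (Icc a b) b = 0 := by
    intro k hk
    rcases Nat.eq_zero_or_pos k with rfl | hk0
    · simp [g]
    · rw [hg_deriv k hk0, hzero k hk0 hk, mul_zero]
  intro x hx
  refine (le_neg_one_pow_mul_of_le_iteratedDerivWithin hab
    (contDiffOn_const.mul (contDiffOn_const.sub hf)) hg_zero
    (fun y hy => (hg_deriv m hm y).symm ▸ hc y hy) x hx).trans_eq ?_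
  ring

theorem eventually_pow_le_sub_of_iteratedDerivWithin_ne_zero {f : ℝ → ℝ} {b δ : ℝ} {m : ℕ}
    (hm : 0 < m) (hδ : 0 < δ) (hf : ContDiffOn ℝ m f (Icc (b - δ) b))
    (hzero : ∀ k, 0 < k → k < m → iteratedDerivWithin k f (Icc (b - δ) b) b = 0)
    (hne : iteratedDerivWithin m f (Icc (b - δ) b) b ≠ 0)
    (hle : ∀ᶠ x in 𝓝[≤] b, f x ≤ f b) :
    ∃ a > 0, ∀ᶠ x in 𝓝[≤] b, a * (b - x) ^ m ≤ f b - f x := by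
  set s := Icc (b - δ) b
  set d := iteratedDerivWithin m f s b
  have hbδ : b - δ < b := by linarith
  have hd2 : 0 < d ^ 2 := sq_pos_of_ne_zero hne
  -- Multiplying by `d` makes the `m`-th derivative positive near `b`, whatever the sign of `d`.
  have hd : ∀ᶠ x in 𝓝[≤] b, d ^ 2 / 2 < d * iteratedDerivWithin m f s x := by
    have hcont : ContinuousWithinAt (iteratedDerivWithin m f s) s b :=
      hf.continuousOn_iteratedDerivWithin le_rfl (uniqueDiffOn_Icc hbδ) b (right_mem_Icc.2 hbδ.le)
    rw [ContinuousWithinAt, nhdsWithin_Icc_eq_nhdsLE hbδ] at hcont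
    exact (hcont.const_mul d).eventually_const_lt (by nlinarith)
  obtain ⟨l, hlb, hl⟩ :=
    mem_nhdsLE_iff_exists_Icc_subset.1 ((hd.and hle).and (Icc_mem_nhdsLE hbδ))
  have hδl : b - δ ≤ l := (hl (left_mem_Icc.2 hlb.le)).2.1
  have hbl : b ∈ Icc l b := right_mem_Icc.2 hlb.le
  have hbound := mul_pow_le_of_le_mul_iteratedDerivWithin (c := d ^ 2 / 2) hm hlb
    (hf.mono (Icc_subset_Icc_left hδl))
    (fun k hk hkm => by
      rw [iteratedDerivWithin_Icc_subset (hf.of_le (by exact_mod_cast hkm.le)) hδl hlb hbl,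
        hzero k hk hkm])
    (fun x hx => by rw [iteratedDerivWithin_Icc_subset hf hδl hlb hx]; exact (hl hx).1.1.le)
  set e := -(-1) ^ m * d
  have he : ∀ x ∈ Icc l b, d ^ 2 / 2 * (b - x) ^ m / m.factorial ≤ e * (f b - f x) :=
    fun x hx => (hbound x hx).trans_eq (by ring)
  have he_pos : 0 < e := by
    have hpos : 0 < d ^ 2 / 2 * (b - l) ^ m / m.factorial := by
      have := sub_pos.2 hlb
      positivity
    exact pos_of_mul_pos_left (hpos.trans_le (he l (left_mem_Icc.2 hlb.le)))
      (sub_nonneg.2 (hl (left_mem_Icc.2 hlb.le)).1.2)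
  refine ⟨d ^ 2 / 2 / m.factorial / e, by positivity, ?_⟩
  filter_upwards [Icc_mem_nhdsLE hlb] with x hx
  have := he x hx
  rw [div_le_iff₀ (by positivity)] at this
  rw [div_div, div_mul_eq_mul_div, div_le_iff₀ (by positivity)]
  linarith

theorem exists_pow_le_one_sub_of_iteratedDerivWithin {φ : ℝ → ℝ} {m : ℕ} {δ : ℝ} (hm : 0 < m)
    (h1 : φ 1 = 1) (hrange : ∀ s ∈ Icc (0 : ℝ) 1, φ s ∈ Icc (0 : ℝ) 1) (hδ : 0 < δ)
    (hf : ContDiffOn ℝ m φ (Icc (1 - δ) 1))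
    (hzero : ∀ k, 0 < k → k < m → iteratedDerivWithin k φ (Icc (1 - δ) 1) 1 = 0)
    (hne : iteratedDerivWithin m φ (Icc (1 - δ) 1) 1 ≠ 0) :
    ∃ a > 0, ∃ l ∈ Ico (0 : ℝ) 1, ∀ x ∈ Icc l 1, a * (1 - x) ^ m ≤ 1 - φ x := by
  have hle : ∀ᶠ x in 𝓝[≤] (1 : ℝ), φ x ≤ φ 1 := by
    filter_upwards [Icc_mem_nhdsLE one_pos] with x hx
    rw [h1]
    exact (hrange x hx).2
  obtain ⟨a, ha, hev⟩ :=
    eventually_pow_le_sub_of_iteratedDerivWithin_ne_zero hm hδ hf hzero hne hle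
  obtain ⟨l, hl1, hl⟩ := mem_nhdsLE_iff_exists_Icc_subset.1 (hev.and (Icc_mem_nhdsLE one_pos))
  refine ⟨a, ha, l, ⟨(hl (left_mem_Icc.2 hl1.le)).2.1, hl1⟩, fun x hx => ?_⟩
  simpa [h1] using (hl hx).1

theorem one_add_sum_mul_prod_one_sub_le {ι : Type*} (s : Finset ι) {x : ι → ℝ}
    (hx : ∀ i ∈ s, 0 ≤ x i ∧ x i ≤ 1) :
    (1 + ∑ i ∈ s, x i) * ∏ i ∈ s, (1 - x i) ≤ 1 := by
  have hprod : ∏ i ∈ s, (1 - x i) ≤ Real.exp (-∑ i ∈ s, x i) := by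
    rw [← Finset.sum_neg_distrib, Real.exp_sum]
    exact Finset.prod_le_prod (fun i hi => by linarith [hx i hi])
      fun i _ => Real.one_sub_le_exp_neg _
  calc (1 + ∑ i ∈ s, x i) * ∏ i ∈ s, (1 - x i)
      ≤ Real.exp (∑ i ∈ s, x i) * Real.exp (-∑ i ∈ s, x i) :=
        mul_le_mul (by linarith [Real.add_one_le_exp (∑ i ∈ s, x i)]) hprod
          (Finset.prod_nonneg fun i hi => by linarith [hx i hi]) (Real.exp_nonneg _)
    _ = 1 := by rw [← Real.exp_add, add_neg_cancel, Real.exp_zero]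

theorem sum_le_four_mul_of_one_sub_two_mul_le_prod {ι : Type*} {s : Finset ι} {x : ι → ℝ}
    {ε : ℝ} (hx : ∀ i ∈ s, 0 ≤ x i ∧ x i ≤ 1) (hε : ε ≤ 1 / 4)
    (h : 1 - 2 * ε ≤ ∏ i ∈ s, (1 - x i)) : ∑ i ∈ s, x i ≤ 4 * ε := by
  have := one_add_sum_mul_prod_one_sub_le s hx
  have := Finset.sum_nonneg fun i hi => (hx i hi).1
  nlinarith

theorem mul_pow_div_le_sum_range_pow (K m : ℕ) :
    (K : ℝ) * ((K : ℝ) - 1) ^ m / 2 ^ (m + 1) ≤ ∑ k ∈ Finset.range K, (k : ℝ) ^ m := by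
  -- pair `k` with `K - 1 - k`, whose sum is `K - 1`
  have hpair : ∀ k ∈ Finset.range K,
      ((K : ℝ) - 1) ^ m / 2 ^ m ≤ (k : ℝ) ^ m + ((K - 1 - k : ℕ) : ℝ) ^ m := by
    intro k hk
    rw [Finset.mem_range] at hk
    have hcast : ((K - 1 - k : ℕ) : ℝ) = (K : ℝ) - 1 - k := by
      rw [Nat.cast_sub (by omega), Nat.cast_sub (by omega), Nat.cast_one]
    have hK : (K : ℝ) - 1 = k + ((K - 1 - k : ℕ) : ℝ) := by rw [hcast]; ring
    rw [div_le_iff₀ (by positivity), hK]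
    calc ((k : ℝ) + ((K - 1 - k : ℕ) : ℝ)) ^ m
        ≤ 2 ^ (m - 1) * ((k : ℝ) ^ m + ((K - 1 - k : ℕ) : ℝ) ^ m) :=
          add_pow_le (Nat.cast_nonneg _) (Nat.cast_nonneg _) m
      _ ≤ 2 ^ m * ((k : ℝ) ^ m + ((K - 1 - k : ℕ) : ℝ) ^ m) := by gcongr; norm_num; omega
      _ = _ := mul_comm _ _
  have hsum := Finset.sum_le_sum hpair
  rw [Finset.sum_const, Finset.card_range, nsmul_eq_mul, Finset.sum_add_distrib,
    Finset.sum_range_reflect (fun k => (k : ℝ) ^ m) K] at hsum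
  rw [pow_succ]
  linarith [show (K : ℝ) * ((K : ℝ) - 1) ^ m / (2 ^ m * 2) =
    (K : ℝ) * (((K : ℝ) - 1) ^ m / 2 ^ m) / 2 by ring]

theorem le_sum_range_of_le_mul_pow {n m : ℕ} {y : ℕ → ℝ} {c L : ℝ} (hc : 0 ≤ c)
    (hL : 2 ≤ L) (hLn : L ≤ n) (hy0 : ∀ k < n, 0 ≤ y k)
    (hy : ∀ k : ℕ, (k : ℝ) < L → c * k ^ m ≤ y k) :
    c * L ^ (m + 1) / 2 ^ (2 * m + 1) ≤ ∑ k ∈ Finset.range n, y k := by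
  set K := ⌈L⌉₊
  have hLK : L ≤ K := Nat.le_ceil L
  have hKn : K ≤ n := Nat.ceil_le.2 hLn
  have hhalf : L / 2 ≤ (K : ℝ) - 1 := by linarith
  calc c * L ^ (m + 1) / 2 ^ (2 * m + 1) = c * (L * (L / 2) ^ m / 2 ^ (m + 1)) := by
        rw [div_pow]; ring
    _ ≤ c * ((K : ℝ) * ((K : ℝ) - 1) ^ m / 2 ^ (m + 1)) := by
        gcongr
    _ ≤ c * ∑ k ∈ Finset.range K, (k : ℝ) ^ m := by gcongr; exact mul_pow_div_le_sum_range_pow K m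
    _ = ∑ k ∈ Finset.range K, c * (k : ℝ) ^ m := Finset.mul_sum _ _ _
    _ ≤ ∑ k ∈ Finset.range K, y k :=
        Finset.sum_le_sum fun k hk => hy k (Nat.lt_ceil.1 (Finset.mem_range.1 hk))
    _ ≤ ∑ k ∈ Finset.range n, y k :=
        Finset.sum_le_sum_of_subset_of_nonneg (Finset.range_subset_range.2 hKn)
          fun k hk _ => hy0 k (Finset.mem_range.1 hk)

theorem rpow_one_div_mul_le_of_mul_le_pow {A X T : ℝ} {m : ℕ} (hm : m ≠ 0) (hA : 0 ≤ A)
    (hX : 0 ≤ X) (hT : 0 ≤ T) (h : A * X ≤ T ^ m) :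
    A ^ (1 / m : ℝ) * X ^ (1 / m : ℝ) ≤ T := by
  rw [← Real.mul_rpow hA hX, one_div, Real.rpow_inv_le_iff_of_pos (by positivity) hT
    (by positivity), Real.rpow_natCast]
  exact h

theorem mul_pow_le_of_one_sub_two_mul_le_prod {φ : ℝ → ℝ} {a l ε : ℝ} {m n T : ℕ}
    (hrange : ∀ s ∈ Icc (0 : ℝ) 1, φ s ∈ Icc (0 : ℝ) 1) (ha : 0 ≤ a) (hl0 : 0 ≤ l)
    (hφ : ∀ x ∈ Icc l 1, a * (1 - x) ^ m ≤ 1 - φ x) (hL : 2 ≤ (1 - l) * n) (hnT : n ≤ T)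
    (hε : ε ≤ 1 / 4) (hprod : 1 - 2 * ε ≤ ∏ k ∈ Finset.range n, φ (1 - k / T)) :
    a * ((1 - l) * n) ^ (m + 1) ≤ 2 ^ (2 * m + 3) * ε * T ^ m := by
  have hnT' : (n : ℝ) ≤ T := by exact_mod_cast hnT
  have hT : (0 : ℝ) < T := by nlinarith
  have hx : ∀ k ∈ Finset.range n, 0 ≤ 1 - φ (1 - k / T) ∧ 1 - φ (1 - k / T) ≤ 1 := by
    intro k hk
    have hkT : (k : ℝ) / T ≤ 1 :=
      (div_le_one hT).2 (by exact_mod_cast (Finset.mem_range.1 hk).le.trans hnT)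
    have := hrange (1 - k / T) ⟨by linarith, by linarith [show 0 ≤ (k : ℝ) / T by positivity]⟩
    constructor <;> linarith [this.1, this.2]
  have hy : ∀ k : ℕ, (k : ℝ) < (1 - l) * n → a / T ^ m * k ^ m ≤ 1 - φ (1 - k / T) := by
    intro k hk
    have hkT : (k : ℝ) / T < 1 - l := by
      rw [div_lt_iff₀ hT]
      nlinarith
    have := hφ (1 - k / T) ⟨by linarith, by linarith [show 0 ≤ (k : ℝ) / T by positivity]⟩
    rw [sub_sub_cancel, div_pow] at this
    linarith [show a / T ^ m * k ^ m = a * (k ^ m / T ^ m) by ring]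
  have hsum := sum_le_four_mul_of_one_sub_two_mul_le_prod hx hε (by simpa using hprod)
  have hlow := le_sum_range_of_le_mul_pow (by positivity) hL (by nlinarith)
    (fun k hk => (hx k (Finset.mem_range.2 hk)).1) hy
  have key := hlow.trans hsum
  rw [div_mul_eq_mul_div, div_div, div_le_iff₀ (by positivity)] at key
  linarith [show 4 * ε * (T ^ m * 2 ^ (2 * m + 1)) = 2 ^ (2 * m + 3) * ε * T ^ m by ring]

/-- `P_s` of the paper, with `p = φ(s)`. -/
noncomputable def exP (n : ℕ) (p : ℝ) : Matrix (Fin (n + 1)) (Fin (n + 1)) ℝ :=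
  (1 - p) • exPinit n + p • exPfin n

noncomputable def exTail (n k : ℕ) : Fin (n + 1) → ℝ :=
  fun i => if k ≤ (i : ℕ) then 1 else 0

theorem exP_mulVec_apply (n : ℕ) (p : ℝ) (v : Fin (n + 1) → ℝ) (i : Fin (n + 1)) :
    (exP n p *ᵥ v) i = (1 - p) * v 0 + p * v ⟨min ((i : ℕ) + 1) n, by omega⟩ := by
  have hfin : ∀ j : Fin (n + 1),
      (j : ℕ) = min ((i : ℕ) + 1) n ↔ j = ⟨min ((i : ℕ) + 1) n, by omega⟩ :=
    fun j => by rw [Fin.ext_iff]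
  simp [exP, exPinit, exPfin, Matrix.mulVec, dotProduct, hfin, add_mul, ite_mul,
    Finset.sum_add_distrib]

theorem exP_mulVec_one (n : ℕ) (p : ℝ) : exP n p *ᵥ 1 = 1 := by
  ext i
  simp [exP_mulVec_apply]

theorem exP_mulVec_exTail_succ {n k : ℕ} (hk : k < n) (p : ℝ) :
    exP n p *ᵥ exTail n (k + 1) = p • exTail n k := by
  ext i
  have hmin : k + 1 ≤ min ((i : ℕ) + 1) n ↔ k ≤ i := by omega
  simp [exP_mulVec_apply, exTail, hmin]

theorem prod_exP_mulVec_one (n : ℕ) (ps : List ℝ) : (ps.map (exP n)).prod *ᵥ 1 = 1 := by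
  induction ps with
  | nil => simp
  | cons p ps ih => simp [← Matrix.mulVec_mulVec, ih, exP_mulVec_one]

theorem prod_exP_mulVec_exTail {n : ℕ} (ps : List ℝ) {k : ℕ} (hk : k + ps.length ≤ n) :
    (ps.map (exP n)).prod *ᵥ exTail n (k + ps.length) = ps.prod • exTail n k := by
  induction ps generalizing k with
  | nil => simp
  | cons p ps ih =>
    simp only [List.length_cons, List.map_cons, List.prod_cons] at hk ⊢
    rw [← Matrix.mulVec_mulVec, show k + (ps.length + 1) = k + 1 + ps.length by omega,
      ih (by omega), Matrix.mulVec_smul, exP_mulVec_exTail_succ (by omega), smul_smul, mul_comm]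

theorem dotProduct_exTail_self {n : ℕ} (v : Fin (n + 1) → ℝ) :
    v ⬝ᵥ exTail n n = v (Fin.last n) := by
  have h : ∀ i : Fin (n + 1), n ≤ (i : ℕ) ↔ i = Fin.last n := fun i => by
    rw [Fin.ext_iff, Fin.val_last]; omega
  simp [dotProduct, exTail, h]

theorem vecMul_prod_exP_append_last {n : ℕ} (ν : Fin (n + 1) → ℝ) (ps qs : List ℝ)
    (hqs : qs.length = n) :
    (ν ᵥ* ((ps ++ qs).map (exP n)).prod) (Fin.last n) = (∑ i, ν i) * qs.prod := by
  have htail : (qs.map (exP n)).prod *ᵥ exTail n n = qs.prod • 1 := by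
    have := prod_exP_mulVec_exTail (n := n) qs (k := 0) (by omega)
    rwa [zero_add, hqs, show exTail n 0 = 1 from funext fun _ => if_pos (Nat.zero_le _)] at this
  rw [← dotProduct_exTail_self (ν ᵥ* _), ← Matrix.dotProduct_mulVec, List.map_append,
    List.prod_append, ← Matrix.mulVec_mulVec, htail, Matrix.mulVec_smul, prod_exP_mulVec_one,
    dotProduct_smul, dotProduct_one, smul_eq_mul, mul_comm]

theorem abs_sub_le_two_mul_tvDist {Ω : Type*} [Fintype Ω] (μ ν : Ω → ℝ) (x : Ω) :
    |μ x - ν x| ≤ 2 * tvDist μ ν := by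
  rw [tvDist, ← mul_assoc, mul_one_div_cancel two_ne_zero, one_mul]
  exact Finset.single_le_sum (f := fun y => |μ y - ν y|) (fun _ _ => abs_nonneg _)
    (Finset.mem_univ x)

theorem list_prod_map_range {M : Type*} [CommMonoid M] (f : ℕ → M) (n : ℕ) :
    ((List.range n).map f).prod = ∏ i ∈ Finset.range n, f i := by
  rw [Finset.prod_eq_multiset_prod, Finset.range_val, Multiset.range, Multiset.map_coe,
    Multiset.prod_coe]

theorem exDelta_eq_ite_last {n : ℕ} (j : Fin (n + 1)) :
    exDelta n j = if j = Fin.last n then 1 else 0 := by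
  simp [exDelta, Fin.ext_iff]

theorem isProbDist_exDelta (n : ℕ) : IsProbDist (exDelta n) := by
  refine ⟨fun j => ?_, by simp [exDelta_eq_ite_last]⟩
  rw [exDelta_eq_ite_last]
  split_ifs <;> norm_num

theorem one_sub_two_mul_le_prod_of_tvDist_le {n T : ℕ} (hnT : n ≤ T) (φ : ℝ → ℝ) {ε : ℝ}
    (H : ∀ ν, IsProbDist ν → tvDist (ν ᵥ* ((List.range T).map
      (fun j : ℕ => exP n (φ ((j + 1) / T)))).prod) (exDelta n) ≤ ε) :
    1 - 2 * ε ≤ ∏ k ∈ Finset.range n, φ (1 - k / T) := by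
  set f : ℕ → ℝ := fun j => φ ((j + 1) / T)
  have hsplit : (List.range T).map (fun j : ℕ => exP n (φ ((j + 1) / T))) =
      ((List.range (T - n)).map f ++ ((List.range n).map (T - n + ·)).map f).map (exP n) := by
    rw [show List.range T = List.range (T - n) ++ (List.range n).map (T - n + ·) by
      rw [← List.range_add, Nat.sub_add_cancel hnT]]
    simp [f, Function.comp_def]
  have hprod : (((List.range n).map (T - n + ·)).map f).prod =
      ∏ k ∈ Finset.range n, φ (1 - k / T) := by
    rw [List.map_map, list_prod_map_range, ← Finset.prod_range_reflect]
    refine Finset.prod_congr rfl fun k hk => ?_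
    rw [Finset.mem_range] at hk
    have hT : (T : ℝ) ≠ 0 := by norm_cast; omega
    simp only [Function.comp_apply, f]
    rw [show T - n + (n - 1 - k) = T - 1 - k by omega, Nat.cast_sub (by omega),
      Nat.cast_sub (by omega)]
    congr 1
    field_simp
    ring
  have htv := (abs_sub_le_two_mul_tvDist _ (exDelta n) (Fin.last n)).trans
    (mul_le_mul_of_nonneg_left (H _ (isProbDist_exDelta n)) zero_le_two)
  rw [hsplit, vecMul_prod_exP_append_last _ _ _ (by simp), (isProbDist_exDelta n).2, one_mul,
    hprod, exDelta_eq_ite_last, if_pos rfl] at htv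
  linarith [neg_abs_le (∏ k ∈ Finset.range n, φ (1 - k / T) - 1)]

theorem example_optimality_general_general
    (m : ℕ) (hm : 1 ≤ m) (φ : ℝ → ℝ)
    (h1 : φ 1 = 1)
    (hrange : ∀ s ∈ Set.Icc (0:ℝ) 1, φ s ∈ Set.Icc (0:ℝ) 1)
    (hsmooth : ∃ δ > (0:ℝ), ContDiffOn ℝ (m + 1) φ (Set.Icc (1 - δ) 1) ∧
      (∀ k : ℕ, 1 ≤ k → k < m → iteratedDerivWithin k φ (Set.Icc (1 - δ) 1) 1 = 0) ∧
      iteratedDerivWithin m φ (Set.Icc (1 - δ) 1) 1 ≠ 0) :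
    ∃ c > (0:ℝ), ∃ n₀ : ℕ, ∃ ε₀ ∈ Set.Ioo (0:ℝ) 1,
      ∀ n : ℕ, n₀ ≤ n → ∀ ε ∈ Set.Ioo (0:ℝ) ε₀, ∀ T : ℕ, n ≤ T →
      (∀ ν : Fin (n + 1) → ℝ, IsProbDist ν →
        tvDist (ν ᵥ* ((List.range T).map (fun j =>
            (1 - φ ((j + 1 : ℝ) / (T : ℝ))) • exPinit n
              + φ ((j + 1 : ℝ) / (T : ℝ)) • exPfin n)).prod)
          (exDelta n) ≤ ε) →
      (T : ℝ) ≥ c * ((n : ℝ) ^ (m + 1) / ε) ^ ((1 : ℝ) / (m : ℝ)) := by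
  obtain ⟨δ, hδ, hC, hzero, hne⟩ := hsmooth
  obtain ⟨a, ha, l, ⟨hl0, hl1⟩, hφ⟩ := exists_pow_le_one_sub_of_iteratedDerivWithin hm h1 hrange
    hδ (hC.of_le (by exact_mod_cast Nat.le_succ m)) hzero hne
  have hl : 0 < 1 - l := sub_pos.2 hl1
  refine ⟨(a * (1 - l) ^ (m + 1) / 2 ^ (2 * m + 3)) ^ (1 / m : ℝ), by positivity,
    ⌈2 / (1 - l)⌉₊, 1 / 4, ⟨by norm_num, by norm_num⟩, ?_⟩
  rintro n hn ε ⟨hε0, hε⟩ T hnT H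
  have hL : 2 ≤ (1 - l) * n := by
    have := (div_le_iff₀' hl).1 (Nat.ceil_le.1 hn)
    linarith
  have hprod : 1 - 2 * ε ≤ ∏ k ∈ Finset.range n, φ (1 - k / T) :=
    one_sub_two_mul_le_prod_of_tvDist_le hnT φ fun ν hν => by
      convert H ν hν using 5
      simp [List.map_eq_flatMap, List.flatMap_assoc, exP]
  have key := mul_pow_le_of_one_sub_two_mul_le_prod hrange ha.le hl0 hφ hL hnT hε.le hprod
  rw [ge_iff_le, mul_comm]
  refine rpow_one_div_mul_le_of_mul_le_pow (by omega) (by positivity) (by positivity)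
    (Nat.cast_nonneg T) ?_
  rw [div_mul_div_comm, div_le_iff₀ (by positivity)]
  calc (n : ℝ) ^ (m + 1) * (a * (1 - l) ^ (m + 1)) = a * ((1 - l) * n) ^ (m + 1) := by
        rw [mul_pow]; ring
    _ ≤ 2 ^ (2 * m + 3) * ε * T ^ m := key
    _ = T ^ m * (ε * 2 ^ (2 * m + 3)) := by ring

/-- **Optimality of the bound in the Discrete Adiabatic Theorem:** for a schedule
`φ` whose first nonvanishing derivative at `1` is of order `m`, in the example on
`{0,…,n}` (where `t_mix = n`) any adiabatic time `T` achieving accuracy `ε` must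
satisfy `T ≥ c (n^{m+1}/ε)^{1/m}`, with constants depending only on `φ` and `m`. -/
theorem example_optimality_general
    (m : ℕ) (hm : 1 ≤ m) (φ : ℝ → ℝ)
    (hcont : ContinuousOn φ (Set.Icc 0 1))
    (h0 : φ 0 = 0) (h1 : φ 1 = 1)
    (hrange : ∀ s ∈ Set.Icc (0:ℝ) 1, φ s ∈ Set.Icc (0:ℝ) 1)
    (hsmooth : ∃ δ > (0:ℝ), ContDiffOn ℝ (m + 1) φ (Set.Icc (1 - δ) 1) ∧
      (∀ k : ℕ, 1 ≤ k → k < m → iteratedDerivWithin k φ (Set.Icc (1 - δ) 1) 1 = 0) ∧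
      iteratedDerivWithin m φ (Set.Icc (1 - δ) 1) 1 ≠ 0) :
    ∃ c > (0:ℝ), ∃ n₀ : ℕ, ∃ ε₀ ∈ Set.Ioo (0:ℝ) 1,
      ∀ n : ℕ, n₀ ≤ n → ∀ ε ∈ Set.Ioo (0:ℝ) ε₀, ∀ T : ℕ, n ≤ T →
      (∀ ν : Fin (n + 1) → ℝ, IsProbDist ν →
        tvDist (ν ᵥ* ((List.range T).map (fun j =>
            (1 - φ ((j + 1 : ℝ) / (T : ℝ))) • exPinit n
              + φ ((j + 1 : ℝ) / (T : ℝ)) • exPfin n)).prod)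
          (exDelta n) ≤ ε) →
      (T : ℝ) ≥ c * ((n : ℝ) ^ (m + 1) / ε) ^ ((1 : ℝ) / (m : ℝ)) :=
  example_optimality_general_general m hm φ h1 hrange hsmooth
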